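/- arXiv:1011.6429 — 4 statements merged into one kernel-verified Lean document; each statement's English description precedes it below -/
import Mathlib

section
/- BPA*01 is less expressive than PA*01 modulo bisimilarity: every BPA*01 expression is bisimilar to a PA*01 expression, and there exists a PA*01 expression (for instance ε·(a·b)*‖c, where a, b, c are distinct actions) that is not bisimilar to any BPA*01 expression. -/
/-- PA*01 expressions over an action set `Act`. -/
inductive PExpr (Act : Type) : Type
  | dl : PExpr Act
  | emp : PExpr Act
  | act : Act → PExpr Act
  | seq : PExpr Act → PExpr Act → PExpr Act
  | alt : PExpr Act → PExpr Act → PExpr Act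
  | star : PExpr Act → PExpr Act
  | par : PExpr Act → PExpr Act → PExpr Act

variable {Act : Type}

/-- The termination predicate `↓` of PA*01. -/
inductive PTerm : PExpr Act → Prop
  | emp : PTerm PExpr.emp
  | altl {p q : PExpr Act} : PTerm p → PTerm (PExpr.alt p q)
  | altr {p q : PExpr Act} : PTerm q → PTerm (PExpr.alt p q)
  | seq {p q : PExpr Act} : PTerm p → PTerm q → PTerm (PExpr.seq p q)
  | star {p : PExpr Act} : PTerm (PExpr.star p)
  | par {p q : PExpr Act} : PTerm p → PTerm q → PTerm (PExpr.par p q)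

/-- The transition relation `p →a p'` of PA*01 (pure interleaving). -/
inductive PStep : PExpr Act → Act → PExpr Act → Prop
  | act {a : Act} : PStep (PExpr.act a) a PExpr.emp
  | altl {p q p' : PExpr Act} {a : Act} : PStep p a p' → PStep (PExpr.alt p q) a p'
  | altr {p q q' : PExpr Act} {a : Act} : PStep q a q' → PStep (PExpr.alt p q) a q'
  | seql {p q p' : PExpr Act} {a : Act} :
      PStep p a p' → PStep (PExpr.seq p q) a (PExpr.seq p' q)
  | seqr {p q q' : PExpr Act} {a : Act} :
      PTerm p → PStep q a q' → PStep (PExpr.seq p q) a q'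
  | star {p p' : PExpr Act} {a : Act} :
      PStep p a p' → PStep (PExpr.star p) a (PExpr.seq p' (PExpr.star p))
  | parl {p q p' : PExpr Act} {a : Act} :
      PStep p a p' → PStep (PExpr.par p q) a (PExpr.par p' q)
  | parr {p q q' : PExpr Act} {a : Act} :
      PStep q a q' → PStep (PExpr.par p q) a (PExpr.par p q')

/-- `p → p'`: a transition with some label. -/
def PStepAny (p q : PExpr Act) : Prop := ∃ a, PStep p a q

/-- `p →* p'`: reachability. -/
def PReach (p q : PExpr Act) : Prop := Relation.ReflTransGen PStepAny p q

/-- `p` is normed: some terminating expression is reachable from `p`. -/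
def PNormed (p : PExpr Act) : Prop := ∃ q, PReach p q ∧ PTerm q

/-- A strongly connected component: a maximal set of mutually reachable states. -/
def IsSCC (C : Set (PExpr Act)) : Prop :=
  (∀ s ∈ C, ∀ t ∈ C, PReach s t) ∧
    ∀ D : Set (PExpr Act), C ⊆ D → (∀ s ∈ D, ∀ t ∈ D, PReach s t) → D = C

/-- A trivial SCC: a singleton `{s}` with no transition `s → s`. -/
def IsTrivialSCC (C : Set (PExpr Act)) : Prop := ∃ s, C = {s} ∧ ¬ PStepAny s s

/-- `C · q = { p · q | p ∈ C }`. -/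
def seqSet (C : Set (PExpr Act)) (q : PExpr Act) : Set (PExpr Act) :=
  (fun p => PExpr.seq p q) '' C

/-- `C₁ ‖ C₂ = { p ‖ q | p ∈ C₁, q ∈ C₂ }`. -/
def parSet (C₁ C₂ : Set (PExpr Act)) : Set (PExpr Act) :=
  Set.image2 PExpr.par C₁ C₂

/-- A basic SCC: `C = C' · q*` for some set `C'` that is not an SCC. -/
def IsBasic (C : Set (PExpr Act)) : Prop :=
  ∃ (C' : Set (PExpr Act)) (q : PExpr Act), C = seqSet C' (PExpr.star q) ∧ ¬ IsSCC C'

/-- The set `Extⁿ(s)` of normed exit transitions from `s`, w.r.t. the SCC `C`. -/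
def ExtN (C : Set (PExpr Act)) (s : PExpr Act) : Set (Act × PExpr Act) :=
  {e | PStep s e.1 e.2 ∧ e.2 ∉ C ∧ PNormed e.2}

/-- `s ∈ C` is an alive exit state if `s↓` or `s` has a normed exit transition. -/
def AliveExit (C : Set (PExpr Act)) (s : PExpr Act) : Prop :=
  s ∈ C ∧ (PTerm s ∨ ∃ e, e ∈ ExtN C s)

/-- `E · q = { (a, r · q) | (a, r) ∈ E }`. -/
def extSeq (E : Set (Act × PExpr Act)) (q : PExpr Act) : Set (Act × PExpr Act) :=
  (fun e => (e.1, PExpr.seq e.2 q)) '' E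

/-- `E ‖ q = { (a, r ‖ q) | (a, r) ∈ E }`. -/
def extParL (E : Set (Act × PExpr Act)) (q : PExpr Act) : Set (Act × PExpr Act) :=
  (fun e => (e.1, PExpr.par e.2 q)) '' E

/-- `p ‖ E = { (a, p ‖ r) | (a, r) ∈ E }`. -/
def extParR (p : PExpr Act) (E : Set (Act × PExpr Act)) : Set (Act × PExpr Act) :=
  (fun e => (e.1, PExpr.par p e.2)) '' E

/-- `s` and `s'` belong to the same strongly connected component. -/
def SameSCC (s s' : PExpr Act) : Prop := ∃ C : Set (PExpr Act), IsSCC C ∧ s ∈ C ∧ s' ∈ C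

/-- The equivalence `∼` on exit transitions: same action, targets in the same SCC. -/
def ExitEquiv (e e' : Act × PExpr Act) : Prop := e.1 = e'.1 ∧ SameSCC e.2 e'.2

/-- Is the expression a star expression? -/
def isStarP : PExpr Act → Bool
  | PExpr.star _ => true
  | _ => false

/-- The measure `OC` on PA*01 expressions. -/
def OC : PExpr Act → ℕ
  | PExpr.dl => 0
  | PExpr.emp => 0
  | PExpr.act _ => 1
  | PExpr.seq _ q => if isStarP q then 0 else OC q + 1
  | PExpr.alt p q => max (OC p) (OC q) + 1
  | PExpr.star _ => 1
  | PExpr.par _ _ => 0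

/-- A PA*01 expression without occurrences of `‖` is a BPA*01 expression. -/
def NoPar : PExpr Act → Prop
  | PExpr.dl => True
  | PExpr.emp => True
  | PExpr.act _ => True
  | PExpr.seq p q => NoPar p ∧ NoPar q
  | PExpr.alt p q => NoPar p ∧ NoPar q
  | PExpr.star p => NoPar p
  | PExpr.par _ _ => False

/-- Bisimulations on PA*01 expressions. -/
def IsBisimulation (R : PExpr Act → PExpr Act → Prop) : Prop :=
  ∀ p q, R p q →
    (∀ a p', PStep p a p' → ∃ q', PStep q a q' ∧ R p' q') ∧
    (∀ a q', PStep q a q' → ∃ p', PStep p a p' ∧ R p' q') ∧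
    (PTerm p ↔ PTerm q)

/-- Bisimilarity of PA*01 expressions. -/
def Bisimilar (p q : PExpr Act) : Prop :=
  ∃ R : PExpr Act → PExpr Act → Prop, IsBisimulation R ∧ R p q

/-
A BPA*01 state bisimilar to `ε·(a·b)* ‖ c` can keep alternating between the two non-terminated
states of this process forever; since only finitely many states are reachable, the states
visited form a nonempty set `H` in which every state has a successor. The measure `OC` never
increases along a transition, and a non-terminating BPA*01 state whose transition does not
decrease `OC` has the form `p·t` and steps to `p'·t` with `p → p'`. Choosing the states of `H`
with least `OC`, one finds a tail `t` shared by a step-closed set of heads. If `t↓`, the heads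
live in the terminating context `[·]·t` and the argument recurses on the (smaller) heads. If
`t` does not terminate, the `c`-transition to a terminated state available in the `a`-phase
must come from `t`, and then the `b`-phase either offers that same `c`-transition or, after
its own `c`, can never terminate.
-/

lemma PTerm.seq_iff {p q : PExpr Act} : PTerm (PExpr.seq p q) ↔ PTerm p ∧ PTerm q :=
  ⟨fun h => by cases h with | seq hp hq => exact ⟨hp, hq⟩, fun h => PTerm.seq h.1 h.2⟩

lemma PStep.seq_inv_of_not_term {p t v : PExpr Act} {x : Act} (h : PStep (PExpr.seq p t) x v)
    (hp : ¬ PTerm p) : ∃ p', PStep p x p' ∧ v = PExpr.seq p' t := by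
  cases h with
  | seql hs => exact ⟨_, hs, rfl⟩
  | seqr h₁ _ => exact absurd h₁ hp

lemma NoPar.of_step {p p' : PExpr Act} {x : Act} (h : PStep p x p') (hp : NoPar p) :
    NoPar p' := by
  induction h with
  | act => trivial
  | altl _ ih => exact ih hp.1
  | altr _ ih => exact ih hp.2
  | seql _ ih => exact ⟨ih hp.1, hp.2⟩
  | seqr _ _ ih => exact ih hp.2
  | star _ ih => exact ⟨ih hp, hp⟩
  | parl => exact hp.elim
  | parr => exact hp.elim

lemma NoPar.of_reach {p q : PExpr Act} (hp : NoPar p) (h : PReach p q) : NoPar q := by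
  induction h with
  | refl => exact hp
  | tail _ hs ih => exact NoPar.of_step hs.choose_spec ih

namespace Bisimilar

variable {p q p' q' : PExpr Act} {x : Act}

lemma refl (p : PExpr Act) : Bisimilar p p :=
  ⟨Eq, by rintro u _ rfl; exact ⟨fun _ v h => ⟨v, h, rfl⟩, fun _ v h => ⟨v, h, rfl⟩, Iff.rfl⟩, rfl⟩

lemma symm (h : Bisimilar p q) : Bisimilar q p := by
  obtain ⟨R, hR, hpq⟩ := h
  refine ⟨fun u v => R v u, fun u v huv => ?_, hpq⟩
  obtain ⟨hl, hr, ht⟩ := hR v u huv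
  exact ⟨hr, hl, ht.symm⟩

lemma term_iff (h : Bisimilar p q) : PTerm p ↔ PTerm q := by
  obtain ⟨R, hR, hpq⟩ := h
  exact (hR p q hpq).2.2

lemma exists_of_step_left (h : Bisimilar p q) (hs : PStep p x p') :
    ∃ q', PStep q x q' ∧ Bisimilar p' q' := by
  obtain ⟨R, hR, hpq⟩ := h
  obtain ⟨q', hq', hr⟩ := (hR p q hpq).1 x p' hs
  exact ⟨q', hq', R, hR, hr⟩

lemma exists_of_step_right (h : Bisimilar p q) (hs : PStep q x q') :
    ∃ p', PStep p x p' ∧ Bisimilar p' q' := by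
  obtain ⟨R, hR, hpq⟩ := h
  obtain ⟨p', hp', hr⟩ := (hR p q hpq).2.1 x q' hs
  exact ⟨p', hp', R, hR, hr⟩

end Bisimilar

lemma PTerm.of_isStarP {t : PExpr Act} (h : isStarP t = true) : PTerm t := by
  cases t <;> first | exact PTerm.star | simp [isStarP] at h

lemma OC_seq_of_not_isStarP {p t : PExpr Act} (h : ¬ isStarP t = true) :
    OC (PExpr.seq p t) = OC t + 1 := by
  simp [OC, h]

lemma OC_le_of_step {p p' : PExpr Act} {x : Act} (h : PStep p x p') : OC p' ≤ OC p := by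
  induction h with
  | act => simp [OC]
  | altl _ ih => simp only [OC]; omega
  | altr _ ih => simp only [OC]; omega
  | seql => simp [OC]
  | @seqr p t t' _ _ ht ih =>
    by_cases hs : isStarP t = true
    · cases ht <;> simp [OC, isStarP] at hs ⊢
    · rw [OC_seq_of_not_isStarP hs]; omega
  | star => simp [OC, isStarP]
  | parl => simp [OC]
  | parr => simp [OC]

lemma exists_seq_of_step_of_OC_le {u v : PExpr Act} {x : Act} (hu : NoPar u) (hnt : ¬ PTerm u)
    (h : PStep u x v) (hOC : OC u ≤ OC v) :
    ∃ p t p', u = PExpr.seq p t ∧ v = PExpr.seq p' t ∧ PStep p x p' := by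
  cases h with
  | act => simp [OC] at hOC
  | altl hs => have := OC_le_of_step hs; simp only [OC] at hOC; omega
  | altr hs => have := OC_le_of_step hs; simp only [OC] at hOC; omega
  | seql hs => exact ⟨_, _, _, rfl, rfl, hs⟩
  | @seqr p t _ _ hp ht =>
    by_cases hs : isStarP t = true
    · exact absurd (PTerm.seq hp (PTerm.of_isStarP hs)) hnt
    · have := OC_le_of_step ht; rw [OC_seq_of_not_isStarP hs] at hOC; omega
  | star => exact absurd PTerm.star hnt
  | parl => exact hu.elim
  | parr => exact hu.elim

lemma exists_common_tail {H : Set (PExpr Act)} (hne : H.Nonempty)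
    (hH : ∀ u ∈ H, NoPar u ∧ ¬ PTerm u ∧ ∃ x v, PStep u x v ∧ v ∈ H) :
    ∃ t, {p | PExpr.seq p t ∈ H}.Nonempty ∧
      ∀ p, PExpr.seq p t ∈ H → ∃ x p', PStep p x p' ∧ PExpr.seq p' t ∈ H := by
  obtain ⟨u₀, hu₀, hmin⟩ : ∃ u₀ ∈ H, ∀ u ∈ H, OC u₀ ≤ OC u :=
    ⟨_, Function.argminOn_mem OC H hne, fun u hu => Function.argminOn_le OC H hu⟩
  have hseq : ∀ u ∈ H, OC u = OC u₀ →
      ∃ x p t p', u = PExpr.seq p t ∧ PStep p x p' ∧ PExpr.seq p' t ∈ H := by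
    intro u hu hOC
    obtain ⟨hnp, hnt, x, v, hv, hvH⟩ := hH u hu
    obtain ⟨p, t, p', rfl, rfl, hp⟩ :=
      exists_seq_of_step_of_OC_le hnp hnt hv (hOC ▸ hmin v hvH)
    exact ⟨x, p, t, p', rfl, hp, hvH⟩
  obtain ⟨-, p₀, t, -, rfl, -, -⟩ := hseq u₀ hu₀ rfl
  refine ⟨t, ⟨p₀, hu₀⟩, fun p hp => ?_⟩
  obtain ⟨x, p₁, t₁, p', hpt, hs, hH'⟩ := hseq _ hp rfl
  obtain ⟨rfl, rfl⟩ := PExpr.seq.inj hpt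
  exact ⟨x, p', hs, hH'⟩

def stateSpace : PExpr Act → Set (PExpr Act)
  | PExpr.dl => {PExpr.dl}
  | PExpr.emp => {PExpr.emp}
  | PExpr.act x => {PExpr.act x, PExpr.emp}
  | PExpr.alt p q => insert (PExpr.alt p q) (stateSpace p ∪ stateSpace q)
  | PExpr.seq p q => ((fun w => PExpr.seq w q) '' stateSpace p) ∪ stateSpace q
  | PExpr.star p =>
    insert (PExpr.star p) ((fun w => PExpr.seq w (PExpr.star p)) '' stateSpace p)
  | PExpr.par p q => Set.image2 PExpr.par (stateSpace p) (stateSpace q)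

lemma mem_stateSpace_self (u : PExpr Act) : u ∈ stateSpace u := by
  induction u with
  | dl | emp => rfl
  | act => exact Or.inl rfl
  | alt | star => exact Set.mem_insert _ _
  | seq p _ ih => exact Or.inl ⟨p, ih, rfl⟩
  | par p q ihp ihq => exact ⟨p, ihp, q, ihq, rfl⟩

lemma stateSpace_finite (u : PExpr Act) : (stateSpace u).Finite := by
  induction u with
  | dl | emp => exact Set.finite_singleton _
  | act => exact (Set.finite_singleton _).insert _
  | alt _ _ ihp ihq => exact (ihp.union ihq).insert _
  | seq _ _ ihp ihq => exact (ihp.image _).union ihq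
  | star _ ih => exact (ih.image _).insert _
  | par _ _ ihp ihq => exact ihp.image2 _ ihq

lemma stateSpace_step_closed (u : PExpr Act) {v w : PExpr Act} {x : Act}
    (hv : v ∈ stateSpace u) (h : PStep v x w) : w ∈ stateSpace u := by
  induction u generalizing v w with
  | dl | emp => cases hv; nomatch h
  | act =>
    rcases hv with rfl | rfl
    · cases h; exact Or.inr rfl
    · nomatch h
  | alt p q ihp ihq =>
    rcases hv with rfl | hv | hv
    · cases h with
      | altl hs => exact Or.inr (Or.inl (ihp (mem_stateSpace_self p) hs))
      | altr hs => exact Or.inr (Or.inr (ihq (mem_stateSpace_self q) hs))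
    · exact Or.inr (Or.inl (ihp hv h))
    · exact Or.inr (Or.inr (ihq hv h))
  | seq p q ihp ihq =>
    rcases hv with ⟨v', hv', rfl⟩ | hv
    · cases h with
      | seql hs => exact Or.inl ⟨_, ihp hv' hs, rfl⟩
      | seqr _ hs => exact Or.inr (ihq (mem_stateSpace_self q) hs)
    · exact Or.inr (ihq hv h)
  | star p ih =>
    rcases hv with rfl | ⟨v', hv', rfl⟩
    · cases h with
      | star hs => exact Or.inr ⟨_, ih (mem_stateSpace_self p) hs, rfl⟩
    · cases h with
      | seql hs => exact Or.inr ⟨_, ih hv' hs, rfl⟩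
      | seqr _ hs =>
        cases hs with
        | star hs => exact Or.inr ⟨_, ih (mem_stateSpace_self p) hs, rfl⟩
  | par p q ihp ihq =>
    obtain ⟨v₁, hv₁, v₂, hv₂, rfl⟩ := hv
    cases h with
    | parl hs => exact ⟨_, ihp hv₁ hs, _, hv₂, rfl⟩
    | parr hs => exact ⟨_, hv₁, _, ihq hv₂ hs, rfl⟩

lemma PReach.mem_stateSpace {u v : PExpr Act} (h : PReach u v) : v ∈ stateSpace u := by
  induction h with
  | refl => exact mem_stateSpace_self u
  | tail _ hs ih => exact stateSpace_step_closed u ih hs.choose_spec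

lemma exists_sizeOf_lt_of_reach (u : PExpr Act) : ∃ N, ∀ v, PReach u v → sizeOf v < N := by
  obtain ⟨M, hM⟩ := ((stateSpace_finite u).image sizeOf).bddAbove
  exact ⟨M + 1, fun v hv => Nat.lt_succ_of_le (hM ⟨v, hv.mem_stateSpace, rfl⟩)⟩

/-- The properties of a context `[·]·t₁·…·tₙ` with all `tᵢ↓` that the argument relies on. -/
structure IsSeqCtx (K : PExpr Act → PExpr Act) : Prop where
  step {p p' : PExpr Act} {x : Act} : PStep p x p' → PStep (K p) x (K p')
  term_iff (p : PExpr Act) : PTerm (K p) ↔ PTerm p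
  step_inv {p v : PExpr Act} {x : Act} : ¬ PTerm p → PStep (K p) x v →
    ∃ p', PStep p x p' ∧ v = K p'

namespace IsSeqCtx

lemma id : IsSeqCtx (id : PExpr Act → PExpr Act) :=
  ⟨fun h => h, fun _ => Iff.rfl, fun _ h => ⟨_, h, rfl⟩⟩

lemma seq {K : PExpr Act → PExpr Act} (hK : IsSeqCtx K) {t : PExpr Act} (ht : PTerm t) :
    IsSeqCtx (fun p => K (PExpr.seq p t)) where
  step h := hK.step (PStep.seql h)
  term_iff p := by rw [hK.term_iff, PTerm.seq_iff, and_iff_left ht]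
  step_inv hp h := by
    obtain ⟨w, hw, rfl⟩ := hK.step_inv (fun h => hp (PTerm.seq_iff.1 h).1) h
    obtain ⟨p', hp', rfl⟩ := hw.seq_inv_of_not_term hp
    exact ⟨p', hp', rfl⟩

end IsSeqCtx

section Loop

variable {a b c : Act} {u : PExpr Act}

def loopA (a b : Act) : PExpr Act :=
  PExpr.seq PExpr.emp (PExpr.star (PExpr.seq (PExpr.act a) (PExpr.act b)))

def loopB (a b : Act) : PExpr Act :=
  PExpr.seq (PExpr.seq PExpr.emp (PExpr.act b)) (PExpr.star (PExpr.seq (PExpr.act a) (PExpr.act b)))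

/-- `procA a b c` is `ε·(a·b)* ‖ c`, `procB a b c` its state after `a`, and `doneA`, `doneB`
their states after `c`. -/
def procA (a b c : Act) : PExpr Act := PExpr.par (loopA a b) (PExpr.act c)

def procB (a b c : Act) : PExpr Act := PExpr.par (loopB a b) (PExpr.act c)

def doneA (a b : Act) : PExpr Act := PExpr.par (loopA a b) PExpr.emp

def doneB (a b : Act) : PExpr Act := PExpr.par (loopB a b) PExpr.emp

lemma loopA_step : PStep (loopA a b) a (loopB a b) :=
  PStep.seqr PTerm.emp (PStep.star (PStep.seql PStep.act))

lemma loopB_step : PStep (loopB a b) b (loopA a b) :=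
  PStep.seql (PStep.seqr PTerm.emp PStep.act)

lemma loopA_step_inv {x : Act} {v : PExpr Act} (h : PStep (loopA a b) x v) : v = loopB a b := by
  cases h with
  | seql hs => nomatch hs
  | seqr _ hs =>
    cases hs with
    | star hs =>
      cases hs with
      | seql hs => cases hs; rfl
      | seqr hs => nomatch hs

lemma loopB_step_inv {x : Act} {v : PExpr Act} (h : PStep (loopB a b) x v) :
    x = b ∧ v = loopA a b := by
  cases h with
  | seql hs =>
    cases hs with
    | seql hs => nomatch hs
    | seqr _ hs => cases hs; exact ⟨rfl, rfl⟩
  | seqr hs => cases hs with | seq _ hs => nomatch hs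

lemma loopA_term : PTerm (loopA a b) := PTerm.seq PTerm.emp PTerm.star

lemma loopB_not_term : ¬ PTerm (loopB a b) := by
  intro h
  cases h with | seq h _ => cases h with | seq _ h => nomatch h

lemma procA_spec (h : Bisimilar u (procA a b c)) :
    ¬ PTerm u ∧ (∃ v, PStep u a v ∧ Bisimilar v (procB a b c)) ∧ (∃ v, PStep u c v ∧ PTerm v) ∧
      ∀ x v, PStep u x v → Bisimilar v (procB a b c) ∨ PTerm v := by
  have hdone : ∀ {v}, Bisimilar v (doneA a b) → PTerm v :=
    fun hv => hv.term_iff.2 (PTerm.par loopA_term PTerm.emp)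
  refine ⟨fun ht => ?_, h.exists_of_step_right (PStep.parl loopA_step), ?_, fun x v hs => ?_⟩
  · cases h.term_iff.1 ht with | par _ hc => nomatch hc
  · obtain ⟨v, hv, hvd⟩ := h.exists_of_step_right (PStep.parr PStep.act)
    exact ⟨v, hv, hdone hvd⟩
  · obtain ⟨e, he, hve⟩ := h.exists_of_step_left hs
    cases he with
    | parl he => obtain rfl := loopA_step_inv he; exact Or.inl hve
    | parr he => cases he; exact Or.inr (hdone hve)

lemma procB_spec (h : Bisimilar u (procB a b c)) :
    ¬ PTerm u ∧ (∃ v, PStep u b v ∧ Bisimilar v (procA a b c)) ∧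
      (∃ v, PStep u c v ∧ Bisimilar v (doneB a b)) ∧
      ∀ x v, PStep u x v → Bisimilar v (procA a b c) ∨ Bisimilar v (doneB a b) := by
  refine ⟨fun ht => ?_, h.exists_of_step_right (PStep.parl loopB_step),
    h.exists_of_step_right (PStep.parr PStep.act), fun x v hs => ?_⟩
  · cases h.term_iff.1 ht with | par _ hc => nomatch hc
  · obtain ⟨e, he, hve⟩ := h.exists_of_step_left hs
    cases he with
    | parl he => obtain ⟨-, rfl⟩ := loopB_step_inv he; exact Or.inl hve
    | parr he => cases he; exact Or.inr hve

lemma doneB_spec (h : Bisimilar u (doneB a b)) :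
    ¬ PTerm u ∧ (∃ v, PStep u b v ∧ PTerm v) ∧ ∀ x v, PStep u x v → x = b := by
  refine ⟨fun ht => ?_, ?_, fun x v hs => ?_⟩
  · cases h.term_iff.1 ht with | par hl _ => exact loopB_not_term hl
  · obtain ⟨v, hv, hvd⟩ := h.exists_of_step_right (PStep.parl (loopB_step (a := a)))
    exact ⟨v, hv, hvd.term_iff.2 (PTerm.par loopA_term PTerm.emp)⟩
  · obtain ⟨e, he, -⟩ := h.exists_of_step_left hs
    cases he with
    | parl he => exact (loopB_step_inv he).1
    | parr he => nomatch he

end Loop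

section NotBPA

variable {a b c : Act}

def OnLoop (a b c : Act) (u : PExpr Act) : Prop :=
  Bisimilar u (procA a b c) ∨ Bisimilar u (procB a b c)

lemma OnLoop.not_term {u : PExpr Act} (h : OnLoop a b c u) : ¬ PTerm u :=
  h.elim (fun h => (procA_spec h).1) (fun h => (procB_spec h).1)

lemma OnLoop.exists_step {u : PExpr Act} (h : OnLoop a b c u) :
    ∃ x v, PStep u x v ∧ OnLoop a b c v := by
  rcases h with hA | hB
  · obtain ⟨v, hv, hvB⟩ := (procA_spec hA).2.1
    exact ⟨a, v, hv, Or.inr hvB⟩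
  · obtain ⟨v, hv, hvA⟩ := (procB_spec hB).2.1
    exact ⟨b, v, hv, Or.inl hvA⟩

lemma OnLoop.alternate (hbc : b ≠ c) {u v : PExpr Act} {x : Act} (hu : OnLoop a b c u)
    (hv : OnLoop a b c v) (h : PStep u x v) :
    (Bisimilar u (procA a b c) ∧ Bisimilar v (procB a b c)) ∨
      (Bisimilar u (procB a b c) ∧ Bisimilar v (procA a b c)) := by
  rcases hu with hA | hB
  · exact ((procA_spec hA).2.2.2 x v h).imp (fun hvB => ⟨hA, hvB⟩) (absurd · hv.not_term)
  · refine ((procB_spec hB).2.2.2 x v h).elim (fun hvA => Or.inr ⟨hB, hvA⟩) (fun hvD => ?_)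
    obtain ⟨w, hw⟩ : ∃ w, PStep v c w := by
      rcases hv with hvA | hvB
      · obtain ⟨w, hw, -⟩ := (procA_spec hvA).2.2.1; exact ⟨w, hw⟩
      · obtain ⟨w, hw, -⟩ := (procB_spec hvB).2.2.1; exact ⟨w, hw⟩
    exact absurd ((doneB_spec hvD).2.2 c w hw) hbc.symm

/-- The `c`-exit of the `a`-phase to a terminated state must come from the tail `t`; the `b`-phase
then either offers the same exit or, after its own `c`, can only continue inside `[·]·t`. -/
lemma not_procA_procB_of_common_tail (hbc : b ≠ c) {K : PExpr Act → PExpr Act}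
    (hK : IsSeqCtx K) {p q t : PExpr Act} (ht : ¬ PTerm t)
    (hA : Bisimilar (K (PExpr.seq p t)) (procA a b c))
    (hB : Bisimilar (K (PExpr.seq q t)) (procB a b c)) : False := by
  have hnt : ∀ r, ¬ PTerm (PExpr.seq r t) := fun r h => ht (PTerm.seq_iff.1 h).2
  obtain ⟨w, hw, hwT⟩ := (procA_spec hA).2.2.1
  obtain ⟨z, hz, rfl⟩ := hK.step_inv (hnt p) hw
  have htz : PStep t c z := by
    cases hz with
    | seql => exact absurd ((hK.term_iff _).1 hwT) (hnt _)
    | seqr _ htz => exact htz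
  have hexit : ∀ r, PTerm r → PStep (K (PExpr.seq r t)) c (K z) :=
    fun r hr => hK.step (PStep.seqr hr htz)
  obtain ⟨-, -, ⟨w', hw', hw'D⟩, hBsteps⟩ := procB_spec hB
  have hq : ¬ PTerm q := fun hq =>
    (hBsteps c _ (hexit q hq)).elim (fun h => (procA_spec h).1 hwT) (fun h => (doneB_spec h).1 hwT)
  obtain ⟨v, hv, rfl⟩ := hK.step_inv (hnt q) hw'
  obtain ⟨q', -, rfl⟩ := hv.seq_inv_of_not_term hq
  obtain ⟨-, ⟨w'', hw'', hw''T⟩, hDsteps⟩ := doneB_spec hw'D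
  have hq' : ¬ PTerm q' := fun hq' => hbc (hDsteps c _ (hexit q' hq')).symm
  obtain ⟨v', hv', rfl⟩ := hK.step_inv (hnt q') hw''
  obtain ⟨q'', -, rfl⟩ := hv'.seq_inv_of_not_term hq'
  exact hnt q'' ((hK.term_iff _).1 hw''T)

lemma false_of_onLoop_set (hbc : b ≠ c) (N : ℕ) {K : PExpr Act → PExpr Act} (hK : IsSeqCtx K)
    {H : Set (PExpr Act)} (hne : H.Nonempty)
    (hH : ∀ u ∈ H, NoPar u ∧ sizeOf u < N ∧ OnLoop a b c (K u) ∧ ∃ x v, PStep u x v ∧ v ∈ H) :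
    False := by
  induction N generalizing K H with
  | zero => obtain ⟨u, hu⟩ := hne; exact Nat.not_lt_zero _ (hH u hu).2.1
  | succ N ih =>
    obtain ⟨t, hne', hclosed⟩ := exists_common_tail hne fun u hu =>
      ⟨(hH u hu).1, fun h => (hH u hu).2.2.1.not_term ((hK.term_iff u).2 h), (hH u hu).2.2.2⟩
    by_cases ht : PTerm t
    · refine ih (hK.seq ht) hne' fun p hp => ⟨(hH _ hp).1.1, ?_, (hH _ hp).2.2.1, hclosed p hp⟩
      have := (hH _ hp).2.1
      simp only [PExpr.seq.sizeOf_spec] at this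
      omega
    · obtain ⟨p, hp⟩ := hne'
      obtain ⟨x, p', hs, hp'⟩ := hclosed p hp
      rcases (hH _ hp).2.2.1.alternate hbc (hH _ hp').2.2.1 (hK.step (PStep.seql hs)) with
        ⟨hA, hB⟩ | ⟨hB, hA⟩ <;>
      exact not_procA_procB_of_common_tail hbc hK ht hA hB

end NotBPA

theorem bpa_less_expressive_than_pa_general {Act : Type} (a b c : Act)
    (hbc : b ≠ c) :
    (∀ p : PExpr Act, NoPar p → ∃ q : PExpr Act, Bisimilar p q) ∧
    (∀ q : PExpr Act, NoPar q →
      ¬ Bisimilar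
        (PExpr.par
          (PExpr.seq PExpr.emp (PExpr.star (PExpr.seq (PExpr.act a) (PExpr.act b))))
          (PExpr.act c))
        q) := by
  refine ⟨fun p _ => ⟨p, Bisimilar.refl p⟩, fun q hq hbis => ?_⟩
  obtain ⟨N, hN⟩ := exists_sizeOf_lt_of_reach q
  exact false_of_onLoop_set hbc N IsSeqCtx.id (H := {u | PReach q u ∧ OnLoop a b c u})
    ⟨q, Relation.ReflTransGen.refl, Or.inl hbis.symm⟩ fun u ⟨hqu, hu⟩ =>
      let ⟨x, v, hv, hvL⟩ := hu.exists_step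
      ⟨hq.of_reach hqu, hN u hqu, hu, x, v, hv, hqu.tail ⟨x, hv⟩, hvL⟩

/-- BPA*01 is less expressive than PA*01 modulo bisimilarity:
every BPA*01 expression (PA*01 expression without `‖`) is bisimilar to a PA*01
expression, and the PA*01 expression `ε·(a·b)* ‖ c` (for distinct actions
`a, b, c`) is not bisimilar to any BPA*01 expression. -/
theorem bpa_less_expressive_than_pa {Act : Type} (a b c : Act)
    (hab : a ≠ b) (hac : a ≠ c) (hbc : b ≠ c) :
    (∀ p : PExpr Act, NoPar p → ∃ q : PExpr Act, Bisimilar p q) ∧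
    (∀ q : PExpr Act, NoPar q →
      ¬ Bisimilar
        (PExpr.par
          (PExpr.seq PExpr.emp (PExpr.star (PExpr.seq (PExpr.act a) (PExpr.act b))))
          (PExpr.act c))
        q) :=
  bpa_less_expressive_than_pa_general a b c hbc
end

section
/- If p and p' are PA*01 expressions such that p →⁺ p', then OC(p) ≥ OC(p'). Moreover, if OC(p) = OC(p'), then either p = p₁·q and p' = p₁'·q, or p = p₁‖p₂ and p' = p₁'‖p₂', for some PA*01 expressions p₁, p₂, p₁', p₂' and q. -/
variable {Act : Type}

/-!
A single step never increases `OC`, and keeps it equal only when it happens inside a context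
`_ · q` (with `q` unchanged) or `_ ‖ _`. Sharing such a context is transitive, so both claims
propagate along `→⁺`.
-/

def SameContext (p p' : PExpr Act) : Prop :=
  (∃ p₁ p₁' q : PExpr Act, p = PExpr.seq p₁ q ∧ p' = PExpr.seq p₁' q) ∨
    (∃ p₁ p₂ p₁' p₂' : PExpr Act, p = PExpr.par p₁ p₂ ∧ p' = PExpr.par p₁' p₂')

theorem SameContext.trans {p q r : PExpr Act} (hpq : SameContext p q) (hqr : SameContext q r) :
    SameContext p r := by
  rcases hpq with ⟨p₁, q₁, s, rfl, rfl⟩ | ⟨p₁, p₂, q₁, q₂, rfl, rfl⟩ <;>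
    rcases hqr with ⟨q₁', r₁, s', hq, rfl⟩ | ⟨q₁', q₂', r₁, r₂, hq, rfl⟩ <;>
    cases hq
  · exact Or.inl ⟨p₁, r₁, s, rfl, rfl⟩
  · exact Or.inr ⟨p₁, p₂, r₁, r₂, rfl, rfl⟩

theorem PStep.eq_seq_star {r t : PExpr Act} {a : Act} (h : PStep (PExpr.star r) a t) :
    ∃ r', t = PExpr.seq r' (PExpr.star r) := by
  cases h
  exact ⟨_, rfl⟩

theorem PStep.OC_le {p p' : PExpr Act} {a : Act} (h : PStep p a p') : OC p' ≤ OC p := by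
  induction h with
  | act | seql | star | parl | parr => simp [OC, isStarP]
  | altl _ ih | altr _ ih => simp only [OC]; omega
  | @seqr _ q _ _ _ hq ih =>
    cases q with
    | star =>
      obtain ⟨_, rfl⟩ := hq.eq_seq_star
      simp [OC, isStarP]
    | _ => simp only [OC, isStarP, Bool.false_eq_true, if_false] at ih ⊢; omega

theorem PStep.sameContext_of_OC_eq {p p' : PExpr Act} {a : Act} (h : PStep p a p')
    (heq : OC p = OC p') : SameContext p p' := by
  cases h with
  | seql => exact Or.inl ⟨_, _, _, rfl, rfl⟩
  | parl | parr => exact Or.inr ⟨_, _, _, _, rfl, rfl⟩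
  | act | star => simp [OC, isStarP] at heq
  | altl h | altr h => have := h.OC_le; simp only [OC] at heq; omega
  | @seqr _ q _ _ _ hq =>
    cases q with
    | star =>
      obtain ⟨_, rfl⟩ := hq.eq_seq_star
      exact Or.inl ⟨_, _, _, rfl, rfl⟩
    | _ =>
      have := hq.OC_le
      simp only [OC, isStarP, Bool.false_eq_true, if_false] at heq this
      omega

theorem OC_monotonic_pa_general {Act : Type} {p p' : PExpr Act}
    (h : Relation.TransGen PStepAny p p') :
    OC p' ≤ OC p ∧
      (OC p = OC p' →
        (∃ p₁ p₁' q : PExpr Act, p = PExpr.seq p₁ q ∧ p' = PExpr.seq p₁' q) ∨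
        (∃ p₁ p₂ p₁' p₂' : PExpr Act,
          p = PExpr.par p₁ p₂ ∧ p' = PExpr.par p₁' p₂')) := by
  induction h with
  | single hstep =>
    obtain ⟨a, hstep⟩ := hstep
    exact ⟨hstep.OC_le, hstep.sameContext_of_OC_eq⟩
  | tail _ hstep ih =>
    obtain ⟨a, hstep⟩ := hstep
    have hle := hstep.OC_le
    exact ⟨hle.trans ih.1, fun heq =>
      SameContext.trans (ih.2 (by omega)) (hstep.sameContext_of_OC_eq (by omega))⟩

/-- If `p →⁺ p'` in PA*01, then `OC p ≥ OC p'`; moreover, if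
`OC p = OC p'`, then either `p = p₁ · q` and `p' = p₁' · q`, or `p = p₁ ‖ p₂`
and `p' = p₁' ‖ p₂'`. -/
theorem OC_monotonic_pa {Act : Type} [Nonempty Act] {p p' : PExpr Act}
    (h : Relation.TransGen PStepAny p p') :
    OC p' ≤ OC p ∧
      (OC p = OC p' →
        (∃ p₁ p₁' q : PExpr Act, p = PExpr.seq p₁ q ∧ p' = PExpr.seq p₁' q) ∨
        (∃ p₁ p₂ p₁' p₂' : PExpr Act,
          p = PExpr.par p₁ p₂ ∧ p' = PExpr.par p₁' p₂')) :=
  OC_monotonic_pa_general h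
end

section
/- If C is a non-trivial strongly connected component in PA*01, then either there exist a set of PA*01 expressions C' and a PA*01 expression q such that C = C'·q, or there exist strongly connected components C₁ and C₂ in PA*01, at least one of them non-trivial, such that C = C₁‖C₂. -/
variable {Act : Type}

/-! Targets of transitions have the form `ε`, `p · q` or `p ‖ q`, and every state of a non-trivial
SCC is the target of a transition, so the SCC is that of some `ε`, `p · q` or `p ‖ q`; `ε` has no
transitions at all.

From `p ‖ q` both components evolve independently, so the SCC of `p ‖ q` is the product of the SCCs
of `p` and `q`, and it is trivial when both of them are.

From `p · q` the shape `_ · q` can only be left by a step of `q`. Unless `q` is a star `r*`, whose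
steps lead to `_ · r*` again, such a step reaches `OC ≤ OC q < OC (p · q)`, and since `OC` never
increases along transitions there is no way back. Hence the whole SCC of `p · q` has the shape `_ · q`.
-/

lemma PStep.target_eq_emp_or_seq_or_par {s t : PExpr Act} {a : Act} (h : PStep s a t) :
    t = .emp ∨ (∃ u v, t = .seq u v) ∨ ∃ u v, t = .par u v := by
  induction h with
  | act => exact .inl rfl
  | altl _ ih | altr _ ih | seqr _ _ ih => exact ih
  | seql | star => exact .inr (.inl ⟨_, _, rfl⟩)
  | parl | parr => exact .inr (.inr ⟨_, _, rfl⟩)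

lemma PStep.oc_le {s t : PExpr Act} {a : Act} (h : PStep s a t) : OC t ≤ OC s := by
  induction h with
  | act | seql | star | parl | parr => simp [OC, isStarP]
  | altl _ ih | altr _ ih => simp only [OC]; omega
  | @seqr p q q' a _ h ih =>
    by_cases hq : isStarP q
    · obtain ⟨r, rfl⟩ : ∃ r, q = .star r := by cases q <;> simp_all [isStarP]
      cases h
      simp [OC, isStarP]
    · simp only [OC, if_neg hq]; omega

lemma PReach.oc_le {s t : PExpr Act} (h : PReach s t) : OC t ≤ OC s := by
  induction h with
  | refl => exact le_rfl
  | tail _ hstep ih => exact hstep.choose_spec.oc_le.trans ih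

lemma exists_eq_seq_of_reach_of_reach {p q t : PExpr Act} (hto : PReach (.seq p q) t)
    (hback : PReach t (.seq p q)) : ∃ p', PExpr.seq p' q = t := by
  induction hto with
  | refl => exact ⟨p, rfl⟩
  | @tail b c _ hbc ih =>
    obtain ⟨p', rfl⟩ := ih (.head hbc hback)
    obtain ⟨a, hstep⟩ := hbc
    cases hstep with
    | seql => exact ⟨_, rfl⟩
    | seqr _ hq =>
      by_cases hstar : isStarP q
      · obtain ⟨r, rfl⟩ : ∃ r, q = .star r := by cases q <;> simp_all [isStarP]
        cases hq
        exact ⟨_, rfl⟩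
      · have hle := hback.oc_le
        have hlt := hq.oc_le
        simp only [OC, if_neg hstar] at hle
        omega

lemma reach_par_iff {p q t : PExpr Act} :
    PReach (.par p q) t ↔ ∃ p' q', t = .par p' q' ∧ PReach p p' ∧ PReach q q' := by
  constructor
  · intro h
    induction h with
    | refl => exact ⟨p, q, rfl, .refl, .refl⟩
    | tail _ hstep ih =>
      obtain ⟨p', q', rfl, hp, hq⟩ := ih
      obtain ⟨a, hstep⟩ := hstep
      cases hstep with
      | parl h => exact ⟨_, _, rfl, hp.tail ⟨a, h⟩, hq⟩
      | parr h => exact ⟨_, _, rfl, hp, hq.tail ⟨a, h⟩⟩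
  · rintro ⟨p', q', rfl, hp, hq⟩
    have hl : PReach (.par p q) (.par p' q) :=
      hp.lift (PExpr.par · q) fun _ _ ⟨a, h⟩ => ⟨a, .parl h⟩
    exact hl.trans (hq.lift (PExpr.par p' ·) fun _ _ ⟨a, h⟩ => ⟨a, .parr h⟩)

def sccOf (p : PExpr Act) : Set (PExpr Act) := {r | PReach p r ∧ PReach r p}

lemma isSCC_sccOf (p : PExpr Act) : IsSCC (sccOf p) := by
  refine ⟨fun s hs t ht => hs.2.trans ht.1, fun D hsub hD => ?_⟩
  have hp : p ∈ D := hsub (⟨.refl, .refl⟩ : p ∈ sccOf p)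
  exact Set.Subset.antisymm (fun d hd => ⟨hD p hp d hd, hD d hd p hp⟩) hsub

lemma IsSCC.eq_sccOf {C : Set (PExpr Act)} (hC : IsSCC C) {p : PExpr Act} (hp : p ∈ C) :
    C = sccOf p :=
  (hC.2 (sccOf p) (fun x hx => ⟨hC.1 p hp x hx, hC.1 x hx p hp⟩) (isSCC_sccOf p).1).symm

lemma IsSCC.nonempty {C : Set (PExpr Act)} (hC : IsSCC C) : C.Nonempty := by
  refine Set.nonempty_iff_ne_empty.2 fun hempty => ?_
  have := hC.2 {.emp} (by simp [hempty]) (by rintro _ rfl _ rfl; exact .refl)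
  simp [hempty] at this

lemma IsSCC.transGen_self {C : Set (PExpr Act)} (hC : IsSCC C) (hnt : ¬ IsTrivialSCC C)
    {t : PExpr Act} (ht : t ∈ C) : Relation.TransGen PStepAny t t := by
  by_cases h : ∃ u ∈ C, u ≠ t
  · obtain ⟨u, hu, hne⟩ := h
    rcases Relation.reflTransGen_iff_eq_or_transGen.1 (hC.1 t ht u hu) with rfl | htu
    · exact absurd rfl hne
    · exact htu.trans_left (hC.1 u hu t ht)
  · push Not at h
    have hCt : C = {t} := Set.eq_singleton_iff_unique_mem.2 ⟨ht, h⟩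
    by_contra hcycle
    exact hnt ⟨t, hCt, fun hself => hcycle (.single hself)⟩

lemma sccOf_seq_subset_range (p q : PExpr Act) :
    sccOf (.seq p q) ⊆ Set.range (PExpr.seq · q) :=
  fun _ ht => exists_eq_seq_of_reach_of_reach ht.1 ht.2

lemma sccOf_par (p q : PExpr Act) : sccOf (.par p q) = parSet (sccOf p) (sccOf q) := by
  ext t
  constructor
  · rintro ⟨hto, hback⟩
    obtain ⟨p', q', rfl, hp, hq⟩ := reach_par_iff.1 hto
    obtain ⟨_, _, heq, hp', hq'⟩ := reach_par_iff.1 hback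
    obtain ⟨rfl, rfl⟩ := PExpr.par.inj heq
    exact ⟨p', ⟨hp, hp'⟩, q', ⟨hq, hq'⟩, rfl⟩
  · rintro ⟨p', ⟨hp, hp'⟩, q', ⟨hq, hq'⟩, rfl⟩
    exact ⟨reach_par_iff.2 ⟨p', q', rfl, hp, hq⟩, reach_par_iff.2 ⟨p, q, rfl, hp', hq'⟩⟩

lemma IsTrivialSCC.parSet {C₁ C₂ : Set (PExpr Act)} (h₁ : IsTrivialSCC C₁)
    (h₂ : IsTrivialSCC C₂) : IsTrivialSCC (parSet C₁ C₂) := by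
  obtain ⟨s, rfl, hs⟩ := h₁
  obtain ⟨t, rfl, ht⟩ := h₂
  refine ⟨.par s t, Set.image2_singleton, ?_⟩
  rintro ⟨a, h⟩
  cases h with
  | parl h => exact hs ⟨a, h⟩
  | parr h => exact ht ⟨a, h⟩

theorem scc_seq_par_general {Act : Type} {C : Set (PExpr Act)}
    (hC : IsSCC C) (hnt : ¬ IsTrivialSCC C) :
    (∃ (C' : Set (PExpr Act)) (q : PExpr Act), C = seqSet C' q) ∨
    (∃ C₁ C₂ : Set (PExpr Act), IsSCC C₁ ∧ IsSCC C₂ ∧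
      (¬ IsTrivialSCC C₁ ∨ ¬ IsTrivialSCC C₂) ∧ C = parSet C₁ C₂) := by
  obtain ⟨t, ht⟩ := hC.nonempty
  have hcycle := hC.transGen_self hnt ht
  obtain ⟨_, ⟨_, hout⟩, -⟩ := Relation.TransGen.head'_iff.1 hcycle
  obtain ⟨_, -, _, hin⟩ := Relation.TransGen.tail'_iff.1 hcycle
  rw [hC.eq_sccOf ht] at hnt ⊢
  rcases hin.target_eq_emp_or_seq_or_par with rfl | ⟨p, q, rfl⟩ | ⟨p, q, rfl⟩
  · cases hout
  · exact .inl ⟨_, q, (Set.image_preimage_eq_of_subset (sccOf_seq_subset_range p q)).symm⟩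
  · refine .inr ⟨sccOf p, sccOf q, isSCC_sccOf p, isSCC_sccOf q, ?_, sccOf_par p q⟩
    contrapose! hnt
    exact sccOf_par p q ▸ hnt.1.parSet hnt.2

/-- Every non-trivial SCC in PA*01 is either of the form `C' · q`,
or of the form `C₁ ‖ C₂` for SCCs `C₁` and `C₂`, at least one of them
non-trivial. -/
theorem scc_seq_par {Act : Type} [Nonempty Act] {C : Set (PExpr Act)}
    (hC : IsSCC C) (hnt : ¬ IsTrivialSCC C) :
    (∃ (C' : Set (PExpr Act)) (q : PExpr Act), C = seqSet C' q) ∨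
    (∃ C₁ C₂ : Set (PExpr Act), IsSCC C₁ ∧ IsSCC C₂ ∧
      (¬ IsTrivialSCC C₁ ∨ ¬ IsTrivialSCC C₂) ∧ C = parSet C₁ C₂) :=
  scc_seq_par_general hC hnt
end

section
/- Let p and q be PA*01 expressions, let r be a PA*01 expression, and let a and b be actions. If (a,p) ∼ (b,q), then (a,p·r) ∼ (b,q·r), (a,p‖r) ∼ (b,q‖r), and (a,r‖p) ∼ (b,r‖q). -/
variable {Act : Type}

theorem PReach.map {p q : PExpr Act} (f : PExpr Act → PExpr Act)
    (hf : ∀ s t, PStepAny s t → PStepAny (f s) (f t)) (h : PReach p q) : PReach (f p) (f q) :=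
  h.lift f hf

theorem sameSCC_of_reach {s t : PExpr Act} (hst : PReach s t) (hts : PReach t s) :
    SameSCC s t := by
  refine ⟨{u | PReach s u ∧ PReach u s}, ⟨fun x hx y hy => hx.2.trans hy.1, ?_⟩,
    ⟨.refl, .refl⟩, ⟨hst, hts⟩⟩
  intro D hsub hD
  have hs : s ∈ D := hsub ⟨.refl, .refl⟩
  exact Set.Subset.antisymm (fun u hu => ⟨hD s hs u hu, hD u hu s hs⟩) hsub

theorem SameSCC.map {s t : PExpr Act} (f : PExpr Act → PExpr Act)
    (hf : ∀ s t, PStepAny s t → PStepAny (f s) (f t)) (h : SameSCC s t) :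
    SameSCC (f s) (f t) := by
  obtain ⟨C, hC, hs, ht⟩ := h
  exact sameSCC_of_reach ((hC.1 s hs t ht).map f hf) ((hC.1 t ht s hs).map f hf)

theorem ExitEquiv.map {e e' : Act × PExpr Act} (f : PExpr Act → PExpr Act)
    (hf : ∀ s t, PStepAny s t → PStepAny (f s) (f t)) (h : ExitEquiv e e') :
    ExitEquiv (e.1, f e.2) (e'.1, f e'.2) :=
  ⟨h.1, h.2.map f hf⟩

theorem exit_equiv_compatible_general {Act : Type}
    (p q r : PExpr Act) (a b : Act) (h : ExitEquiv (a, p) (b, q)) :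
    ExitEquiv (a, PExpr.seq p r) (b, PExpr.seq q r) ∧
    ExitEquiv (a, PExpr.par p r) (b, PExpr.par q r) ∧
    ExitEquiv (a, PExpr.par r p) (b, PExpr.par r q) :=
  ⟨h.map (PExpr.seq · r) fun _ _ ⟨c, hc⟩ => ⟨c, .seql hc⟩,
    h.map (PExpr.par · r) fun _ _ ⟨c, hc⟩ => ⟨c, .parl hc⟩,
    h.map (PExpr.par r ·) fun _ _ ⟨c, hc⟩ => ⟨c, .parr hc⟩⟩

/-- The equivalence `∼` on exit transitions is compatible with
sequential and parallel composition: if `(a,p) ∼ (b,q)` then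
`(a,p·r) ∼ (b,q·r)`, `(a,p‖r) ∼ (b,q‖r)` and `(a,r‖p) ∼ (b,r‖q)`. -/
theorem exit_equiv_compatible {Act : Type} [Nonempty Act]
    (p q r : PExpr Act) (a b : Act) (h : ExitEquiv (a, p) (b, q)) :
    ExitEquiv (a, PExpr.seq p r) (b, PExpr.seq q r) ∧
    ExitEquiv (a, PExpr.par p r) (b, PExpr.par q r) ∧
    ExitEquiv (a, PExpr.par r p) (b, PExpr.par r q) :=
  exit_equiv_compatible_general p q r a b h
end
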